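/- arXiv:1606.03688 — 6 statements merged into one kernel-verified Lean document; each statement's English description precedes it below -/
import Mathlib

section
/- For every k with 1 ≤ k ≤ 5 there exists θ_k ∈ [0,1) such that Re(δ(ζ)/(1 − θ_k ζ)) > 0 for all complex ζ with |ζ| < 1, where δ(ζ) = Σ_{ℓ=1}^k (1/ℓ)(1−ζ)^ℓ. In particular one may take θ_1 = θ_2 = 0. -/
/-!
Writing `ζ = x + iy`, the real part of `δ(ζ) / (1 - θζ)` has the sign of
`Re (δ(ζ) (1 - θ ζ̄))`, a real polynomial in `x, y`. For each order and the chosen `θ` this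
polynomial is a nonnegative combination of products of `1 - x`, `1 + x`, `1 - x² - y²`, `y²` and
squares, with a strictly positive term, all of which are positive on the open unit disk.
For `k ≥ 3` the BDF method is not A-stable, so `Re δ` itself changes sign on the disk and a
positive `θ` is needed.
-/

open ComplexConjugate Complex

noncomputable def bdfDelta (k : ℕ) (ζ : ℂ) : ℂ :=
  ∑ ℓ ∈ Finset.Icc 1 k, (ℓ : ℂ)⁻¹ * (1 - ζ) ^ ℓ

lemma bdfDelta_zero (ζ : ℂ) : bdfDelta 0 ζ = 0 := by
  simp [bdfDelta]

lemma bdfDelta_succ (k : ℕ) (ζ : ℂ) :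
    bdfDelta (k + 1) ζ = bdfDelta k ζ + (1 - ζ) ^ (k + 1) / (k + 1 : ℕ) := by
  rw [bdfDelta, Finset.sum_Icc_succ_top (by omega), inv_mul_eq_div]
  rfl

lemma Complex.re_div_pos_iff {w z : ℂ} (hz : z ≠ 0) : 0 < (w / z).re ↔ 0 < (w * conj z).re := by
  rw [div_eq_mul_inv, inv_def, ← mul_assoc, re_mul_ofReal]
  exact mul_pos_iff_of_pos_right (inv_pos.2 (normSq_pos.2 hz))

lemma re_div_one_sub_mul_pos {f : ℂ → ℂ} {θ : ℝ} (hθ : |θ| ≤ 1)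
    (h : ∀ x y : ℝ, x ^ 2 + y ^ 2 < 1 → 0 < (f (x + y * I) * (1 - θ * conj (x + y * I))).re)
    {ζ : ℂ} (hζ : ‖ζ‖ < 1) : 0 < (f ζ / (1 - θ * ζ)).re := by
  have hθζ : ‖(θ : ℂ) * ζ‖ < 1 := by
    rw [norm_mul, norm_real, Real.norm_eq_abs]
    nlinarith [abs_nonneg θ, norm_nonneg ζ]
  have hne : 1 - (θ : ℂ) * ζ ≠ 0 := (Units.oneSub _ hθζ).ne_zero
  rw [re_div_pos_iff hne, map_sub, map_one, map_mul, conj_ofReal]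
  have hxy : ζ.re ^ 2 + ζ.im ^ 2 < 1 := by
    nlinarith [Complex.sq_norm ζ, normSq_apply ζ, norm_nonneg ζ]
  simpa only [re_add_im] using h ζ.re ζ.im hxy

lemma unit_disk_bounds {x y : ℝ} (hxy : x ^ 2 + y ^ 2 < 1) :
    0 < 1 - x ∧ 0 < 1 + x ∧ 0 < 1 - x ^ 2 - y ^ 2 := by
  refine ⟨?_, ?_, ?_⟩ <;> linarith [sq_nonneg y, sq_nonneg (1 - x), sq_nonneg (1 + x)]

lemma re_bdfDelta_one_mul_pos {x y : ℝ} (hxy : x ^ 2 + y ^ 2 < 1) :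
    0 < (bdfDelta 1 (x + y * I) * (1 - ((0 : ℝ) : ℂ) * conj (x + y * I))).re := by
  obtain ⟨hl, -, -⟩ := unit_disk_bounds hxy
  simp only [bdfDelta_succ, bdfDelta_zero, pow_succ, pow_zero, mul_re, mul_im, add_re, add_im,
    sub_re, sub_im, one_re, one_im, zero_re, zero_im, ofReal_re, ofReal_im, I_re, I_im, conj_re,
    conj_im, div_natCast_re, div_natCast_im]
  push_cast
  linarith

lemma re_bdfDelta_two_mul_pos {x y : ℝ} (hxy : x ^ 2 + y ^ 2 < 1) :
    0 < (bdfDelta 2 (x + y * I) * (1 - ((0 : ℝ) : ℂ) * conj (x + y * I))).re := by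
  obtain ⟨-, -, hs⟩ := unit_disk_bounds hxy
  simp only [bdfDelta_succ, bdfDelta_zero, pow_succ, pow_zero, mul_re, mul_im, add_re, add_im,
    sub_re, sub_im, one_re, one_im, zero_re, zero_im, ofReal_re, ofReal_im, I_re, I_im, conj_re,
    conj_im, div_natCast_re, div_natCast_im]
  push_cast
  linarith [sq_nonneg (1 - x)]

lemma re_bdfDelta_three_mul_pos {x y : ℝ} (hxy : x ^ 2 + y ^ 2 < 1) :
    0 < (bdfDelta 3 (x + y * I) * (1 - ((1 / 10 : ℝ) : ℂ) * conj (x + y * I))).re := by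
  obtain ⟨hl, hr, hs⟩ := unit_disk_bounds hxy
  simp only [bdfDelta_succ, bdfDelta_zero, pow_succ, pow_zero, mul_re, mul_im, add_re, add_im,
    sub_re, sub_im, one_re, one_im, zero_re, zero_im, ofReal_re, ofReal_im, I_re, I_im, conj_re,
    conj_im, div_natCast_re, div_natCast_im]
  push_cast
  linarith [hs.le, mul_nonneg hs.le (sq_nonneg y), mul_nonneg hr.le (sq_nonneg (1 - x ^ 2 - y ^ 2)),
    mul_nonneg (pow_nonneg hr.le 3) hs.le, mul_nonneg hl.le (sq_nonneg (y ^ 2)),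
    mul_nonneg hl.le hs.le, mul_nonneg (sq_nonneg (1 - x)) hs.le,
    mul_nonneg (pow_nonneg hl.le 3) (sq_nonneg y), pow_pos hl 4,
    mul_nonneg (sq_nonneg (x - 1 / 2)) (sq_nonneg y), mul_nonneg (sq_nonneg (x - 3 / 5)) hl.le]

lemma re_bdfDelta_four_mul_pos {x y : ℝ} (hxy : x ^ 2 + y ^ 2 < 1) :
    0 < (bdfDelta 4 (x + y * I) * (1 - ((3 / 10 : ℝ) : ℂ) * conj (x + y * I))).re := by
  obtain ⟨hl, hr, hs⟩ := unit_disk_bounds hxy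
  have hsy : 0 ≤ (1 - x ^ 2 - y ^ 2) * y ^ 2 := mul_nonneg hs.le (sq_nonneg y)
  simp only [bdfDelta_succ, bdfDelta_zero, pow_succ, pow_zero, mul_re, mul_im, add_re, add_im,
    sub_re, sub_im, one_re, one_im, zero_re, zero_im, ofReal_re, ofReal_im, I_re, I_im, conj_re,
    conj_im, div_natCast_re, div_natCast_im]
  push_cast
  linarith [hsy, sq_nonneg (1 - x ^ 2 - y ^ 2), mul_nonneg (sq_nonneg (1 + x)) hsy,
    mul_nonneg (sq_nonneg (1 + x)) (sq_nonneg (1 - x ^ 2 - y ^ 2)),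
    mul_nonneg (pow_nonneg hr.le 4) hs.le, mul_nonneg hl.le hsy,
    mul_nonneg hl.le (sq_nonneg (1 - x ^ 2 - y ^ 2)), mul_pos (pow_pos hl 2) hs, pow_pos hl 5,
    mul_nonneg (sq_nonneg (x - 1 / 10)) (sq_nonneg (1 - x)),
    mul_nonneg (sq_nonneg (x - 1 / 5)) hl.le,
    mul_nonneg (sq_nonneg (x - 1 / 5)) (mul_nonneg hl.le (sq_nonneg y)),
    mul_nonneg (sq_nonneg (x - 1 / 5)) (sq_nonneg (1 - x))]

lemma re_bdfDelta_five_mul_pos {x y : ℝ} (hxy : x ^ 2 + y ^ 2 < 1) :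
    0 < (bdfDelta 5 (x + y * I) * (1 - ((9 / 10 : ℝ) : ℂ) * conj (x + y * I))).re := by
  obtain ⟨hl, hr, hs⟩ := unit_disk_bounds hxy
  have hsy : 0 ≤ (1 - x ^ 2 - y ^ 2) * y ^ 2 := mul_nonneg hs.le (sq_nonneg y)
  have hly : 0 ≤ (1 - x) * y ^ 2 := mul_nonneg hl.le (sq_nonneg y)
  have hry : 0 ≤ (1 + x) * y ^ 2 := mul_nonneg hr.le (sq_nonneg y)
  simp only [bdfDelta_succ, bdfDelta_zero, pow_succ, pow_zero, mul_re, mul_im, add_re, add_im,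
    sub_re, sub_im, one_re, one_im, zero_re, zero_im, ofReal_re, ofReal_im, I_re, I_im, conj_re,
    conj_im, div_natCast_re, div_natCast_im]
  push_cast
  linarith [mul_nonneg hr.le (mul_nonneg hs.le (sq_nonneg (y ^ 2))),
    mul_nonneg hr.le (mul_nonneg (sq_nonneg (1 - x ^ 2 - y ^ 2)) (sq_nonneg y)),
    mul_nonneg (pow_nonneg hr.le 3) hsy,
    mul_nonneg hl.le (mul_nonneg hs.le (sq_nonneg (y ^ 2))),
    mul_nonneg (mul_nonneg (sq_nonneg (1 - x)) hr.le) hsy,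
    mul_nonneg (mul_nonneg (sq_nonneg (1 - x)) (pow_nonneg hr.le 3)) hs.le,
    mul_nonneg (pow_nonneg hl.le 3) hsy, mul_pos (pow_pos hl 3) (pow_pos hs 2),
    mul_nonneg (mul_nonneg (pow_nonneg hl.le 3) (sq_nonneg (1 + x))) hs.le,
    mul_nonneg (sq_nonneg (x + 3 / 10)) hry, mul_nonneg (sq_nonneg (x + 1 / 5)) hly,
    mul_nonneg (sq_nonneg (x + 1 / 5)) (sq_nonneg (1 - x)),
    mul_nonneg (sq_nonneg (x - 1 / 10)) (sq_nonneg (1 - x)),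
    mul_nonneg (sq_nonneg (x - 4 / 5)) (mul_nonneg hr.le hs.le),
    mul_nonneg (sq_nonneg (x - 9 / 10)) (mul_nonneg hr.le hs.le),
    mul_nonneg (sq_nonneg (y ^ 2 - 3 / 4 * (1 - x))) hly,
    mul_nonneg (sq_nonneg (y ^ 2 - 3 / 4 * (1 - x))) (sq_nonneg (1 - x)),
    mul_nonneg (sq_nonneg (y ^ 2 - 3 / 4 * (1 - x))) hry,
    mul_nonneg (sq_nonneg (y ^ 2 - (1 - x))) (sq_nonneg (1 - x))]

/-- **Nevanlinna–Odeh multiplier property of the BDF methods of orders 1–5.**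
For every `1 ≤ k ≤ 5` there exists `θ ∈ [0,1)` (with `θ = 0` for `k ≤ 2`) such that
`Re (δ(ζ)/(1 - θζ)) > 0` for all complex `ζ` with `|ζ| < 1`, where
`δ(ζ) = ∑_{ℓ=1}^k (1/ℓ)(1-ζ)^ℓ` is the generating polynomial of the `k`-step BDF method. -/
theorem nevanlinna_odeh_multiplier (k : ℕ) (hk1 : 1 ≤ k) (hk5 : k ≤ 5) :
    ∃ θ : ℝ, 0 ≤ θ ∧ θ < 1 ∧ (k ≤ 2 → θ = 0) ∧
      ∀ ζ : ℂ, ‖ζ‖ < 1 →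
        0 < ((∑ ℓ ∈ Finset.Icc 1 k, ((ℓ : ℂ))⁻¹ * (1 - ζ) ^ ℓ) / (1 - (θ : ℂ) * ζ)).re := by
  interval_cases k
  · exact ⟨0, le_rfl, one_pos, fun _ => rfl, fun _ =>
      re_div_one_sub_mul_pos (by norm_num) fun _ _ => re_bdfDelta_one_mul_pos⟩
  · exact ⟨0, le_rfl, one_pos, fun _ => rfl, fun _ =>
      re_div_one_sub_mul_pos (by norm_num) fun _ _ => re_bdfDelta_two_mul_pos⟩
  · exact ⟨1 / 10, by norm_num, by norm_num, by norm_num, fun _ =>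
      re_div_one_sub_mul_pos (by norm_num) fun _ _ => re_bdfDelta_three_mul_pos⟩
  · exact ⟨3 / 10, by norm_num, by norm_num, by norm_num, fun _ =>
      re_div_one_sub_mul_pos (by norm_num) fun _ _ => re_bdfDelta_four_mul_pos⟩
  · exact ⟨9 / 10, by norm_num, by norm_num, by norm_num, fun _ =>
      re_div_one_sub_mul_pos (by norm_num) fun _ _ => re_bdfDelta_five_mul_pos⟩
end

section
/- For every k with 1 ≤ k ≤ 5 there exist θ_k ∈ [0,1) and a symmetric positive definite matrix G = (g_{ij}) ∈ ℝ^{k×k} such that for every real inner product space with inner product (·,·) and all vectors v_0, …, v_k in it, (Σ_{i=0}^k δ_i v_{k−i}, v_k − θ_k v_{k−1}) ≥ Σ_{i,j=1}^k g_{ij} (v_i, v_j) − Σ_{i,j=1}^k g_{ij} (v_{i−1}, v_{j−1}), where δ_0, …, δ_k are the k-step BDF coefficients. -/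
/-!
Both sides are quadratic forms in `v_0, …, v_k` with real coefficients, so the defect
`⟪∑ δ_i v_{k-i}, v_k - θ v_{k-1}⟫ - (|(v_1,…,v_k)|_G² - |(v_0,…,v_{k-1})|_G²)` is
`∑ M_ij ⟪v_i, v_j⟫` for one symmetric matrix `M`. If the defect is nonnegative for real scalars,
`M` is positive semidefinite, and by the Schur product theorem with the Gram matrix of the `v_i`
it is then nonnegative in every real inner product space. For `k ≤ 5` the multiplier `θ` and the
matrix `G` (which exist by the Nevanlinna–Odeh multiplier property and Dahlquist's G-stability
lemma) are given explicitly: the scalar defect is a sum of squares and `G` has an `LDLᵀ`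
factorisation with positive pivots.
-/

open Finset Matrix Polynomial RealInnerProductSpace

theorem Polynomial.coeff_one_sub_X_pow {R : Type*} [CommRing R] (n j : ℕ) :
    ((1 - X : R[X]) ^ n).coeff j = (-1) ^ j * n.choose j := by
  rw [sub_eq_neg_add, add_pow, finsetSum_coeff]
  simp only [one_pow, mul_one, neg_pow (X : R[X]), ← C_eq_natCast, ← C_1, ← C_neg, ← C_pow,
    mul_right_comm _ (X ^ _), ← C_mul, coeff_C_mul_X_pow]
  rw [sum_ite_eq]
  split_ifs with h
  · rfl
  · rw [Nat.choose_eq_zero_of_lt (by simpa using h)]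
    simp

noncomputable def bdfCoeff (k j : ℕ) : ℝ := ∑ ℓ ∈ Icc 1 k, (-1) ^ j * (ℓ.choose j : ℝ) / ℓ

theorem eq_bdfCoeff_of_forall_eval {k : ℕ} {δ : ℕ → ℝ}
    (hδ : ∀ ζ : ℂ, ∑ j ∈ range (k + 1), (δ j : ℂ) * ζ ^ j
        = ∑ ℓ ∈ Icc 1 k, ((ℓ : ℂ))⁻¹ * (1 - ζ) ^ ℓ) {j : ℕ} (hj : j ≤ k) :
    δ j = bdfCoeff k j := by
  have hpoly : ∑ j ∈ range (k + 1), C (δ j : ℂ) * X ^ j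
      = ∑ ℓ ∈ Icc 1 k, C ((ℓ : ℂ))⁻¹ * (1 - X) ^ ℓ :=
    Polynomial.funext fun ζ => by simpa [eval_finsetSum] using hδ ζ
  have hcoeff := congr_arg (coeff · j) hpoly
  simp only [finsetSum_coeff, coeff_C_mul, coeff_X_pow, coeff_one_sub_X_pow, mul_ite, mul_one,
    mul_zero, sum_ite_eq, mem_range, Nat.lt_succ_of_le hj, if_true] at hcoeff
  apply Complex.ofReal_injective
  rw [hcoeff, bdfCoeff]
  push_cast
  exact sum_congr rfl fun ℓ _ => by ring

section GramForm

variable {E : Type*} [NormedAddCommGroup E] [InnerProductSpace ℝ E] {ι : Type*} [Fintype ι]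

def gramForm (M : Matrix ι ι ℝ) (w : ι → E) : ℝ :=
  ∑ i, ∑ j, M i j * ⟪w i, w j⟫

theorem gramForm_add (A B : Matrix ι ι ℝ) (w : ι → E) :
    gramForm (A + B) w = gramForm A w + gramForm B w := by
  simp [gramForm, add_mul, sum_add_distrib]

theorem gramForm_sub (A B : Matrix ι ι ℝ) (w : ι → E) :
    gramForm (A - B) w = gramForm A w - gramForm B w := by
  simp [gramForm, sub_mul, sum_sub_distrib]

theorem gramForm_smul (c : ℝ) (A : Matrix ι ι ℝ) (w : ι → E) :
    gramForm (c • A) w = c * gramForm A w := by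
  simp [gramForm, mul_sum, mul_assoc]

theorem gramForm_vecMulVec (a b : ι → ℝ) (w : ι → E) :
    gramForm (vecMulVec a b) w = ⟪∑ i, a i • w i, ∑ j, b j • w j⟫ := by
  simp only [gramForm, vecMulVec_apply, sum_inner, inner_sum, real_inner_smul_left,
    real_inner_smul_right]
  rw [sum_comm]
  exact sum_congr rfl fun _ _ => sum_congr rfl fun _ _ => by ring

theorem Matrix.PosSemidef.gramForm_nonneg {M : Matrix ι ι ℝ} (hM : M.PosSemidef) (w : ι → E) :
    0 ≤ gramForm M w := by
  simpa [gramForm, dotProduct, mulVec, mul_sum] using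
    (hM.hadamard (posSemidef_gram ℝ w)).dotProduct_mulVec_nonneg 1

end GramForm

section Padding

variable {α : Type*} [Zero α] {k : ℕ}

def Matrix.padTop (G : Matrix (Fin k) (Fin k) α) : Matrix (Fin (k + 1)) (Fin (k + 1)) α :=
  of fun i j => Fin.cases 0 (fun i' => Fin.cases 0 (G i') j) i

def Matrix.padBottom (G : Matrix (Fin k) (Fin k) α) : Matrix (Fin (k + 1)) (Fin (k + 1)) α :=
  of fun i j => Fin.lastCases 0 (fun i' => Fin.lastCases 0 (G i') j) i

theorem Matrix.IsSymm.padTop {G : Matrix (Fin k) (Fin k) α} (hG : G.IsSymm) :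
    G.padTop.IsSymm := by
  refine IsSymm.ext fun i j => ?_
  cases i using Fin.cases <;> cases j using Fin.cases <;> simp [Matrix.padTop, hG.apply]

theorem Matrix.IsSymm.padBottom {G : Matrix (Fin k) (Fin k) α} (hG : G.IsSymm) :
    G.padBottom.IsSymm := by
  refine IsSymm.ext fun i j => ?_
  cases i using Fin.lastCases <;> cases j using Fin.lastCases <;>
    simp [Matrix.padBottom, hG.apply]

variable {E : Type*} [NormedAddCommGroup E] [InnerProductSpace ℝ E]

theorem gramForm_padTop (G : Matrix (Fin k) (Fin k) ℝ) (w : Fin (k + 1) → E) :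
    gramForm G.padTop w = gramForm G (fun i => w i.succ) := by
  simp [gramForm, padTop, Fin.sum_univ_succ]

theorem gramForm_padBottom (G : Matrix (Fin k) (Fin k) ℝ) (w : Fin (k + 1) → E) :
    gramForm G.padBottom w = gramForm G (fun i => w i.castSucc) := by
  simp [gramForm, padBottom, Fin.sum_univ_castSucc]

end Padding

section MultiplierDefect

variable {E : Type*} [NormedAddCommGroup E] [InnerProductSpace ℝ E]
  {k : ℕ} {δ : ℕ → ℝ} {θ : ℝ} {G : Matrix (Fin k) (Fin k) ℝ}

def multiplierDefect (k : ℕ) (δ : ℕ → ℝ) (θ : ℝ) (G : Matrix (Fin k) (Fin k) ℝ) (v : ℕ → E) :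
    ℝ :=
  ⟪∑ i ∈ range (k + 1), δ i • v (k - i), v k - θ • v (k - 1)⟫
    - (gramForm G (fun i : Fin k => v (i + 1)) - gramForm G (fun i : Fin k => v i))

noncomputable def multiplierMatrix (k : ℕ) (δ : ℕ → ℝ) (θ : ℝ) (G : Matrix (Fin k) (Fin k) ℝ) :
    Matrix (Fin (k + 1)) (Fin (k + 1)) ℝ :=
  let a : Fin (k + 1) → ℝ := fun i => δ (k - i)
  let b : Fin (k + 1) → ℝ := fun j =>
    (if (j : ℕ) = k then 1 else 0) - θ * if (j : ℕ) = k - 1 then 1 else 0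
  (1 / 2 : ℝ) • (vecMulVec a b + vecMulVec b a) - G.padTop + G.padBottom

theorem multiplierDefect_eq_gramForm (v : ℕ → E) :
    multiplierDefect k δ θ G v
      = gramForm (multiplierMatrix k δ θ G) (fun i : Fin (k + 1) => v i) := by
  have ha : ∑ i : Fin (k + 1), δ (k - i) • v i = ∑ i ∈ range (k + 1), δ i • v (k - i) := by
    rw [Fin.sum_univ_eq_sum_range (fun i => δ (k - i) • v i), ← sum_range_reflect]
    refine sum_congr rfl fun i hi => ?_
    rw [mem_range] at hi
    congr 2
    omega
  have hb : ∑ j : Fin (k + 1),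
      ((if (j : ℕ) = k then 1 else 0) - θ * if (j : ℕ) = k - 1 then 1 else 0) • v j
        = v k - θ • v (k - 1) := by
    rw [Fin.sum_univ_eq_sum_range
      (fun j => ((if j = k then 1 else 0) - θ * if j = k - 1 then 1 else 0) • v j)]
    simp [sub_smul, sum_sub_distrib, ite_smul]
  rw [multiplierDefect, multiplierMatrix, gramForm_add, gramForm_sub, gramForm_smul, gramForm_add,
    gramForm_vecMulVec, gramForm_vecMulVec, gramForm_padTop, gramForm_padBottom, ha, hb,
    real_inner_comm (∑ i ∈ range (k + 1), _)]
  simp only [Fin.val_succ, Fin.val_castSucc]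
  ring

theorem isSymm_multiplierMatrix (hG : G.IsSymm) : (multiplierMatrix k δ θ G).IsSymm := by
  refine ((IsSymm.smul ?_ _).sub hG.padTop).add hG.padBottom
  simp [IsSymm, transpose_add, transpose_vecMulVec, add_comm]

theorem posSemidef_multiplierMatrix (hG : G.IsSymm)
    (h : ∀ x : ℕ → ℝ, 0 ≤ multiplierDefect k δ θ G x) : (multiplierMatrix k δ θ G).PosSemidef := by
  refine .of_dotProduct_mulVec_nonneg (isHermitian_iff_isSymm.2 (isSymm_multiplierMatrix hG))
    fun x => ?_
  have hx := h fun n => if hn : n < k + 1 then x ⟨n, hn⟩ else 0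
  rw [multiplierDefect_eq_gramForm] at hx
  simpa [gramForm, Fin.is_le, Real.inner_apply, dotProduct, mulVec, mul_sum, mul_comm,
    mul_left_comm] using hx

theorem multiplierDefect_nonneg (hG : G.IsSymm)
    (h : ∀ x : ℕ → ℝ, 0 ≤ multiplierDefect k δ θ G x) (v : ℕ → E) :
    0 ≤ multiplierDefect k δ θ G v := by
  rw [multiplierDefect_eq_gramForm]
  exact (posSemidef_multiplierMatrix hG h).gramForm_nonneg _

end MultiplierDefect

theorem Matrix.posDef_of_eq_sum_mul_mul {n : Type*} [Fintype n] [LinearOrder n]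
    {G U : Matrix n n ℝ} {d : n → ℝ} (hU : U.IsUpperTriangular) (hU1 : ∀ i, U i i = 1)
    (hd : ∀ i, 0 < d i) (hG : ∀ i j, G i j = ∑ m, U m i * d m * U m j) : G.PosDef := by
  have hUnit : IsUnit U :=
    (isUnit_iff_isUnit_det U).2 (by simp [det_of_isUpperTriangular hU, hU1])
  obtain rfl : G = star U * diagonal d * U := by
    ext i j
    simp [hG, mul_apply, diagonal_apply]
  exact hUnit.posDef_star_left_conjugate_iff.2 (PosDef.diagonal hd)

structure IsBDFMultiplier (k : ℕ) (θ : ℝ) (G : Matrix (Fin k) (Fin k) ℝ) : Prop where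
  nonneg : 0 ≤ θ
  lt_one : θ < 1
  posDef : G.PosDef
  multiplierDefect_nonneg : ∀ x : ℕ → ℝ, 0 ≤ multiplierDefect k (bdfCoeff k) θ G x

/- The matrices `U`, `d` and the squares below come from exact `LDLᵀ` factorisations of `G` and
of `multiplierMatrix k (bdfCoeff k) θ G`. -/

theorem isBDFMultiplier_one : IsBDFMultiplier 1 0 !![1 / 2] where
  nonneg := le_rfl
  lt_one := one_pos
  posDef := posDef_of_eq_sum_mul_mul (U := !![1]) (d := ![1 / 2])
    (by intro i j h; fin_cases i; fin_cases j; simp_all)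
    (by intro i; fin_cases i; simp)
    (by intro i; fin_cases i; norm_num)
    (by intro i j; fin_cases i; fin_cases j; norm_num)
  multiplierDefect_nonneg x := by
    norm_num [multiplierDefect, gramForm, bdfCoeff, sum_range_succ, Real.inner_apply]
    linarith [sq_nonneg (x 1 - x 0)]

theorem isBDFMultiplier_two : IsBDFMultiplier 2 (1 / 4) !![5 / 16, -1 / 2; -1 / 2, 17 / 16] where
  nonneg := by norm_num
  lt_one := by norm_num
  posDef := posDef_of_eq_sum_mul_mul (U := !![1, -8 / 5; 0, 1]) (d := ![5 / 16, 21 / 80])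
    (by intro i j h; fin_cases i <;> fin_cases j <;> simp_all)
    (by intro i; fin_cases i <;> simp)
    (by intro i; fin_cases i <;> norm_num)
    (by intro i j; fin_cases i <;> fin_cases j <;> norm_num [Fin.sum_univ_succ])
  multiplierDefect_nonneg x := by
    norm_num [multiplierDefect, gramForm, bdfCoeff, Fin.sum_univ_succ, sum_range_succ,
      sum_Icc_succ_top, Nat.choose, Real.inner_apply]
    linarith [sq_nonneg (-x 0 + 9 / 5 * x 1 - 4 / 5 * x 2), sq_nonneg (x 2 - x 1)]

theorem isBDFMultiplier_three : IsBDFMultiplier 3 (1 / 2)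
    !![13 / 16, -5 / 4, 25 / 48; -5 / 4, 133 / 48, -29 / 16; 25 / 48, -29 / 16, 7 / 4] where
  nonneg := by norm_num
  lt_one := by norm_num
  posDef := posDef_of_eq_sum_mul_mul
    (U := !![1, -20 / 13, 25 / 39; 0, 1, -631 / 529; 0, 0, 1])
    (d := ![13 / 16, 529 / 624, 1999 / 9522])
    (by intro i j h; fin_cases i <;> fin_cases j <;> simp_all)
    (by intro i; fin_cases i <;> simp)
    (by intro i; fin_cases i <;> norm_num)
    (by intro i j; fin_cases i <;> fin_cases j <;> norm_num [Fin.sum_univ_succ])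
  multiplierDefect_nonneg x := by
    norm_num [multiplierDefect, gramForm, bdfCoeff, Fin.sum_univ_succ, sum_range_succ,
      sum_Icc_succ_top, Nat.choose, Real.inner_apply]
    linarith [sq_nonneg (-x 0 + 20 / 13 * x 1 - 29 / 39 * x 2 + 8 / 39 * x 3),
      sq_nonneg (-x 1 + 5 / 22 * x 2 + 17 / 22 * x 3), sq_nonneg (x 3 - x 2)]

theorem isBDFMultiplier_four : IsBDFMultiplier 4 (3 / 5)
    !![47 / 192, -11 / 32, 427 / 960, -19 / 48; -11 / 32, 217 / 240, -87 / 64, 65 / 64;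
      427 / 960, -87 / 64, 85 / 32, -17 / 8; -19 / 48, 65 / 64, -17 / 8, 123 / 64] where
  nonneg := by norm_num
  lt_one := by norm_num
  posDef := posDef_of_eq_sum_mul_mul
    (U := !![1, -66 / 47, 427 / 235, -76 / 47; 0, 1, -33153 / 19016, 20745 / 19016;
      0, 0, 1, -55147645 / 51756653; 0, 0, 0, 1])
    (d := ![47 / 192, 2377 / 5640, 51756653 / 91276800, 7062761 / 51756653])
    (by intro i j h; fin_cases i <;> fin_cases j <;> simp_all)
    (by intro i; fin_cases i <;> simp)
    (by intro i; fin_cases i <;> norm_num)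
    (by intro i j; fin_cases i <;> fin_cases j <;> norm_num [Fin.sum_univ_succ])
  multiplierDefect_nonneg x := by
    norm_num [multiplierDefect, gramForm, bdfCoeff, Fin.sum_univ_succ, sum_range_succ,
      sum_Icc_succ_top, Nat.choose, Real.inner_apply]
    linarith [sq_nonneg (-x 0 + 66 / 47 * x 1 - 427 / 235 * x 2 + 452 / 235 * x 3 - 24 / 47 * x 4),
      sq_nonneg (-x 1 + 5881 / 2657 * x 2 - 13972 / 7971 * x 3 + 4300 / 7971 * x 4),
      sq_nonneg (-x 2 + 1590411 / 999826 * x 3 - 590585 / 999826 * x 4), sq_nonneg (x 4 - x 3)]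

theorem isBDFMultiplier_five : IsBDFMultiplier 5 (23 / 25)
    !![1 / 100, -11 / 200, 91 / 750, -187 / 1500, 169 / 3000;
      -11 / 200, 8 / 25, -371 / 500, 83 / 100, -79 / 200;
      91 / 750, -371 / 500, 371 / 200, -291 / 125, 237 / 200;
      -187 / 1500, 83 / 100, -291 / 125, 437 / 125, -991 / 500;
      169 / 3000, -79 / 200, 237 / 200, -991 / 500, 1227 / 1000] where
  nonneg := by norm_num
  lt_one := by norm_num
  posDef := posDef_of_eq_sum_mul_mul
    (U := !![1, -11 / 2, 182 / 15, -187 / 15, 169 / 30; 0, 1, -64 / 15, 866 / 105, -73 / 15;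
      0, 0, 1, -8980 / 2891, 6215 / 2891; 0, 0, 0, 1, -1071761 / 950836; 0, 0, 0, 0, 1])
    (d := ![1 / 100, 7 / 400, 2891 / 45000, 237709 / 1806875, 103570239 / 3327926000])
    (by intro i j h; fin_cases i <;> fin_cases j <;> simp_all)
    (by intro i; fin_cases i <;> simp)
    (by intro i; fin_cases i <;> norm_num)
    (by intro i j; fin_cases i <;> fin_cases j <;> norm_num [Fin.sum_univ_succ])
  multiplierDefect_nonneg x := by
    norm_num [multiplierDefect, gramForm, bdfCoeff, Fin.sum_univ_succ, sum_range_succ,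
      sum_Icc_succ_top, Nat.choose, Real.inner_apply]
    linarith [sq_nonneg (-x 0 + 11 / 2 * x 1 - 182 / 15 * x 2 + 187 / 15 * x 3 - 89 / 6 * x 4
        + 10 * x 5),
      sq_nonneg (-x 1 + 118 / 45 * x 2 - 46 / 15 * x 3 + 59 / 15 * x 4 - 112 / 45 * x 5),
      sq_nonneg (-x 2 + 36 / 31 * x 3 - 216 / 217 * x 4 + 181 / 217 * x 5),
      sq_nonneg (-x 3 + 364 / 311 * x 4 - 53 / 311 * x 5), sq_nonneg (x 5 - x 4)]

theorem exists_isBDFMultiplier {k : ℕ} (hk1 : 1 ≤ k) (hk5 : k ≤ 5) :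
    ∃ θ G, IsBDFMultiplier k θ G := by
  interval_cases k
  exacts [⟨_, _, isBDFMultiplier_one⟩, ⟨_, _, isBDFMultiplier_two⟩, ⟨_, _, isBDFMultiplier_three⟩,
    ⟨_, _, isBDFMultiplier_four⟩, ⟨_, _, isBDFMultiplier_five⟩]

/-- **The Nevanlinna–Odeh multiplier energy inequality for BDF methods of orders 1–5.**
For every `1 ≤ k ≤ 5` there exist `θ ∈ [0,1)` and a symmetric positive definite matrix
`G ∈ ℝ^{k×k}` such that in every real inner product space,
`(∑_{i=0}^k δ_i v_{k-i}, v_k - θ v_{k-1}) ≥ ∑_{i,j=1}^k g_{ij}(v_i,v_j) - ∑_{i,j=1}^k g_{ij}(v_{i-1},v_{j-1})`,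
where `δ_0, …, δ_k` are the `k`-step BDF coefficients, i.e. the coefficients of
`δ(ζ) = ∑_{ℓ=1}^k (1/ℓ)(1-ζ)^ℓ`. -/
theorem bdf_multiplier_energy_inequality (k : ℕ) (hk1 : 1 ≤ k) (hk5 : k ≤ 5)
    (δc : ℕ → ℝ)
    (hδ : ∀ ζ : ℂ, ∑ j ∈ Finset.range (k + 1), (δc j : ℂ) * ζ ^ j
        = ∑ ℓ ∈ Finset.Icc 1 k, ((ℓ : ℂ))⁻¹ * (1 - ζ) ^ ℓ) :
    ∃ θ : ℝ, 0 ≤ θ ∧ θ < 1 ∧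
      ∃ G : Matrix (Fin k) (Fin k) ℝ, G.IsSymm ∧ G.PosDef ∧
        ∀ (E : Type*) [NormedAddCommGroup E] [InnerProductSpace ℝ E] (v : ℕ → E),
          (∑ i : Fin k, ∑ j : Fin k, G i j * ⟪v ((i : ℕ) + 1), v ((j : ℕ) + 1)⟫)
            - (∑ i : Fin k, ∑ j : Fin k, G i j * ⟪v (i : ℕ), v (j : ℕ)⟫)
          ≤ ⟪∑ i ∈ Finset.range (k + 1), δc i • v (k - i), v k - θ • v (k - 1)⟫ := by
  obtain ⟨θ, G, hθG⟩ := exists_isBDFMultiplier hk1 hk5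
  have hG : G.IsSymm := isHermitian_iff_isSymm.1 hθG.posDef.isHermitian
  refine ⟨θ, hθG.nonneg, hθG.lt_one, G, hG, hθG.posDef, fun E _ _ v => ?_⟩
  have hsum : ∑ i ∈ range (k + 1), δc i • v (k - i)
      = ∑ i ∈ range (k + 1), bdfCoeff k i • v (k - i) :=
    sum_congr rfl fun i hi => by
      rw [eq_bdfCoeff_of_forall_eval hδ (Nat.lt_succ_iff.1 (mem_range.1 hi))]
  have hdefect := multiplierDefect_nonneg hG hθG.multiplierDefect_nonneg v
  rw [multiplierDefect, ← hsum] at hdefect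
  unfold gramForm at hdefect
  linarith
end

section
/- Let k ≥ 1, and let γ_0, …, γ_{k−1} be the extrapolation coefficients of the k-step BDF scheme. Then Σ_{i=0}^{k−1} (k−i−1)^{ℓ−1} γ_i = k^{ℓ−1} for every ℓ = 1, …, k (with the convention 0⁰ = 1). In other words, the explicit k-step BDF method, described by the coefficients δ_0, …, δ_k and γ_0, …, γ_{k−1}, has order k. -/
/-!
Expanding `(1 - ζ)^k` by the binomial theorem identifies the extrapolation coefficients as
`γ_i = (-1)^i * C(k, i+1)`. Substituting `j = k - 1 - i`, the order condition becomes
`∑_{j ≤ k} (-1)^(k-j) C(k, j) j^m = 0` for `m < k`, which is the vanishing of the `k`-th forward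
difference of `x ↦ x^m` at `0`.
-/

open Finset Polynomial

theorem one_sub_one_sub_pow {R : Type*} [CommRing R] (x : R) (k : ℕ) :
    1 - (1 - x) ^ k = x * ∑ i ∈ range k, (-1) ^ i * (k.choose (i + 1) : R) * x ^ i := by
  rw [sub_eq_neg_add 1 x, add_pow, sum_range_succ']
  simp only [one_pow, mul_one, pow_zero, Nat.choose_zero_right, Nat.cast_one, mul_sum]
  rw [sub_add_eq_sub_sub_swap, sub_self, zero_sub, ← sum_neg_distrib]
  exact sum_congr rfl fun i _ => by ring

theorem eq_of_forall_ne_zero_sum_mul_pow_eq {R : Type*} [CommRing R] [IsDomain R] [Infinite R]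
    {n : ℕ} {f g : ℕ → R}
    (h : ∀ x ≠ 0, ∑ i ∈ range n, f i * x ^ i = ∑ i ∈ range n, g i * x ^ i)
    {i : ℕ} (hi : i < n) : f i = g i := by
  have hcoeff (c : ℕ → R) : (∑ j ∈ range n, C (c j) * X ^ j).coeff i = c i := by
    simp [hi]
  have hpoly : ∑ j ∈ range n, C (f j) * X ^ j = ∑ j ∈ range n, C (g j) * X ^ j := by
    refine eq_of_infinite_eval_eq _ _ ((Set.finite_singleton 0).infinite_compl.mono ?_)
    intro x hx
    simpa [eval_finsetSum] using h x hx
  rw [← hcoeff f, hpoly, hcoeff g]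

theorem alternating_sum_choose_mul_pow_eq_zero {R : Type*} [CommRing R] {m k : ℕ} (hm : m < k) :
    ∑ j ∈ range (k + 1), (-1) ^ (k - j) * (k.choose j : R) * (j : R) ^ m = 0 := by
  have h := congrFun (fwdDiff_iter_pow_eq_zero_of_lt (R := R) hm) 0
  rw [fwdDiff_iter_eq_sum_shift] at h
  simpa [zsmul_eq_mul] using h

theorem sum_pow_mul_alternating_choose_succ {R : Type*} [CommRing R] {m k : ℕ} (hm : m < k) :
    ∑ i ∈ range k, ((k - i - 1 : ℕ) : R) ^ m * ((-1) ^ i * (k.choose (i + 1) : R)) =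
      (k : R) ^ m := by
  have h := alternating_sum_choose_mul_pow_eq_zero (R := R) hm
  rw [sum_range_succ, ← sum_range_reflect] at h
  have hterm : ∀ i ∈ range k, ((k - i - 1 : ℕ) : R) ^ m * ((-1) ^ i * (k.choose (i + 1) : R)) =
      -((-1) ^ (k - (k - 1 - i)) * (k.choose (k - 1 - i) : R) * ((k - 1 - i : ℕ) : R) ^ m) := by
    intro i hi
    have hi := mem_range.mp hi
    rw [show k - (k - 1 - i) = i + 1 by omega,
      ← Nat.choose_symm_of_eq_add (show k = (k - 1 - i) + (i + 1) by omega),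
      show k - i - 1 = k - 1 - i by omega, pow_succ]
    ring
  rw [sum_congr rfl hterm, sum_neg_distrib]
  simpa [neg_eq_iff_add_eq_zero, add_comm] using h

theorem bdf_explicit_order_conditions_general (k : ℕ)
    (γc : ℕ → ℝ)
    (hγ : ∀ ζ : ℂ, ζ * ∑ i ∈ Finset.range k, (γc i : ℂ) * ζ ^ i = 1 - (1 - ζ) ^ k) :
    ∀ ℓ : ℕ, 1 ≤ ℓ → ℓ ≤ k →
      ∑ i ∈ Finset.range k, ((k - i - 1 : ℕ) : ℝ) ^ (ℓ - 1) * γc i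
        = (k : ℝ) ^ (ℓ - 1) := by
  have hcoeff : ∀ i < k, γc i = (-1) ^ i * k.choose (i + 1) := fun i hi => by
    have h := eq_of_forall_ne_zero_sum_mul_pow_eq (f := fun i => (γc i : ℂ))
      (fun ζ hζ => mul_left_cancel₀ hζ ((hγ ζ).trans (one_sub_one_sub_pow ζ k))) hi
    exact_mod_cast h
  intro ℓ hℓ hℓk
  rw [sum_congr rfl fun i hi => by rw [hcoeff i (mem_range.mp hi)]]
  exact sum_pow_mul_alternating_choose_succ (by omega)

/-- **Order conditions of the explicit (extrapolated) `k`-step BDF method.**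
If `γ_0, …, γ_{k-1}` are the extrapolation coefficients of the `k`-step BDF scheme,
defined by `∑_{i=0}^{k-1} γ_i ζ^i = (1 - (1-ζ)^k)/ζ`, then
`∑_{i=0}^{k-1} (k-i-1)^{ℓ-1} γ_i = k^{ℓ-1}` for `ℓ = 1, …, k` (with the convention `0⁰ = 1`). -/
theorem bdf_explicit_order_conditions (k : ℕ) (hk : 1 ≤ k)
    (γc : ℕ → ℝ)
    (hγ : ∀ ζ : ℂ, ζ * ∑ i ∈ Finset.range k, (γc i : ℂ) * ζ ^ i = 1 - (1 - ζ) ^ k) :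
    ∀ ℓ : ℕ, 1 ≤ ℓ → ℓ ≤ k →
      ∑ i ∈ Finset.range k, ((k - i - 1 : ℕ) : ℝ) ^ (ℓ - 1) * γc i
        = (k : ℝ) ^ (ℓ - 1) :=
  bdf_explicit_order_conditions_general k γc hγ
end

section
/- Let X be a Banach space, k ≥ 1, and let u : ℝ → X be (k+1)-times continuously differentiable on an interval [t − kτ, t] with τ > 0. Then there is a constant C_k depending only on k (not on u, t, τ or X) such that ‖(1/τ) Σ_{j=0}^k δ_j u(t − jτ) − u'(t)‖_X ≤ C_k τ^k max_{s ∈ [t−kτ, t]} ‖u^{(k+1)}(s)‖_X. -/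
/-!
Expand each `u (t - jτ)` to order `k` about `t`. The BDF weights kill every Taylor term except the
first-order one, because their moments are `∑ⱼ δⱼ jᵐ = -[m = 1]` for `m ≤ k`; the remainders then
contribute `O(τ^(k+1))`, which becomes `O(τ^k)` after division by `τ`.

The moments are the values at `ζ = 1` of `θᵐ δ`, where `θ = ζ d/dζ` is the Euler operator. From the
definition of `δ`, `θ δ = (1 - ζ)^k - 1`, and each application of `θ` lowers the order of vanishing
of `(1 - ζ)^k` at `ζ = 1` by at most one.
-/

open Set
open scoped Nat

section EulerOperator

open Polynomial Finset

variable {R : Type*} [CommSemiring R]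

noncomputable def eulerOp : R[X] →ₗ[R] R[X] := LinearMap.mulLeft R X ∘ₗ derivative

theorem eulerOp_apply (p : R[X]) : eulerOp p = X * derivative p := rfl

theorem eulerOp_C_mul_X_pow (a : R) (n : ℕ) : eulerOp (C a * X ^ n) = C (a * n) * X ^ n := by
  rw [eulerOp_apply, derivative_C_mul_X_pow]
  cases n with
  | zero => simp
  | succ n => rw [Nat.add_sub_cancel, mul_left_comm, ← pow_succ']

theorem eulerOp_pow_C_mul_X_pow (a : R) (n m : ℕ) :
    (eulerOp ^ m) (C a * X ^ n) = C (a * n ^ m) * X ^ n := by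
  induction m with
  | zero => simp
  | succ m ih => rw [pow_succ', Module.End.mul_apply, ih, eulerOp_C_mul_X_pow, pow_succ, mul_assoc]

theorem eval_one_eulerOp_pow_sum (s : Finset ℕ) (c : ℕ → R) (m : ℕ) :
    ((eulerOp ^ m) (∑ j ∈ s, C (c j) * X ^ j)).eval 1 = ∑ j ∈ s, c j * j ^ m := by
  simp [map_sum, eulerOp_pow_C_mul_X_pow, eval_finsetSum]

theorem eulerOp_pow_succ_one (m : ℕ) : (eulerOp ^ (m + 1)) (1 : R[X]) = 0 := by
  rw [pow_succ, Module.End.mul_apply, eulerOp_apply, derivative_one, mul_zero, map_zero]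

theorem pow_sub_dvd_eulerOp_pow_of_pow_dvd {p q : R[X]} {n : ℕ} (m : ℕ) (hdvd : q ^ n ∣ p) :
    q ^ (n - m) ∣ (eulerOp ^ m) p := by
  induction m with
  | zero => simpa
  | succ m ih =>
    rw [Nat.sub_succ, pow_succ', Module.End.mul_apply, eulerOp_apply]
    exact (pow_sub_one_dvd_derivative_of_pow_dvd ih).mul_left X

end EulerOperator

section BDFPolynomial

open Polynomial Finset

variable {K : Type*} [Field K]

noncomputable def bdfPoly (k : ℕ) : K[X] := ∑ ℓ ∈ Icc 1 k, C (ℓ : K)⁻¹ * (1 - X) ^ ℓ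

theorem eval_one_bdfPoly (k : ℕ) : (bdfPoly k : K[X]).eval 1 = 0 := by
  refine (eval_finsetSum _ _ _).trans (sum_eq_zero fun ℓ hℓ => ?_)
  simp [Nat.one_le_iff_ne_zero.mp (mem_Icc.mp hℓ).1]

variable [CharZero K]

theorem eulerOp_bdfPoly (k : ℕ) : eulerOp (bdfPoly k : K[X]) = (1 - X) ^ k - 1 := by
  induction k with
  | zero => simp [bdfPoly]
  | succ k ih =>
    have hC : C ((k + 1 : ℕ) : K)⁻¹ * C ((k + 1 : ℕ) : K) = 1 := by
      rw [← C_mul, inv_mul_cancel₀ (Nat.cast_ne_zero.mpr k.succ_ne_zero), C_1]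
    rw [bdfPoly, sum_Icc_succ_top (by omega), ← bdfPoly, map_add, ih, eulerOp_apply,
      derivative_C_mul, derivative_pow, Nat.add_sub_cancel]
    simp only [derivative_sub, derivative_one, derivative_X]
    linear_combination (-(X * (1 - X) ^ k)) * hC

theorem eval_one_eulerOp_pow_bdfPoly {k m : ℕ} (hm : m ≤ k) :
    ((eulerOp ^ m) (bdfPoly k : K[X])).eval 1 = if m = 1 then -1 else 0 := by
  cases m with
  | zero => simpa using eval_one_bdfPoly k
  | succ m =>
    have hvanish : ((eulerOp ^ m) ((1 - X : K[X]) ^ k)).eval 1 = 0 := by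
      refine eval_eq_zero_of_dvd_of_eval_eq_zero
        (pow_sub_dvd_eulerOp_pow_of_pow_dvd m dvd_rfl) ?_
      rw [eval_pow, eval_sub, eval_one, eval_X, sub_self, zero_pow (by omega)]
    rw [pow_succ, Module.End.mul_apply, eulerOp_bdfPoly, map_sub, eval_sub, hvanish]
    cases m with
    | zero => simp
    | succ m => simp [eulerOp_pow_succ_one]

theorem sum_mul_pow_eq_of_eq_bdfPoly {k : ℕ} {δ : ℕ → K}
    (hδ : ∑ j ∈ range (k + 1), C (δ j) * X ^ j = bdfPoly k) {m : ℕ} (hm : m ≤ k) :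
    ∑ j ∈ range (k + 1), δ j * j ^ m = if m = 1 then -1 else 0 := by
  rw [← eval_one_eulerOp_pow_sum, hδ, eval_one_eulerOp_pow_bdfPoly hm]

end BDFPolynomial

section Taylor

open Finset

variable {E : Type*} [NormedAddCommGroup E] [NormedSpace ℝ E]

noncomputable def taylorSum (u : ℕ → ℝ → E) (n : ℕ) (b y : ℝ) : E :=
  ∑ m ∈ range (n + 1), ((y - b) ^ m / m !) • u m b

theorem taylorSum_self (u : ℕ → ℝ → E) (n : ℕ) (b : ℝ) : taylorSum u n b b = u 0 b := by
  simp [taylorSum, sum_range_succ']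

theorem hasDerivAt_pow_div_factorial (m : ℕ) (b y : ℝ) :
    HasDerivAt (fun y => (y - b) ^ (m + 1) / ((m + 1)! : ℝ)) ((y - b) ^ m / m !) y := by
  refine ((((hasDerivAt_id' y).sub_const b).pow (m + 1)).div_const _).congr_deriv ?_
  rw [Nat.factorial_succ]
  push_cast
  field_simp

theorem hasDerivAt_taylorSum_succ (u : ℕ → ℝ → E) (n : ℕ) (b y : ℝ) :
    HasDerivAt (taylorSum u (n + 1) b) (taylorSum (fun m => u (m + 1)) n b y) y := by
  have hsplit : taylorSum u (n + 1) b =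
      fun y => ∑ m ∈ range (n + 1), ((y - b) ^ (m + 1) / ((m + 1)! : ℝ)) • u (m + 1) b
        + u 0 b := by
    funext y
    simp [taylorSum, sum_range_succ' _ (n + 1)]
  rw [hsplit]
  exact (HasDerivAt.fun_sum fun m _ =>
    (hasDerivAt_pow_div_factorial m b y).smul_const _).add_const _

theorem norm_le_mul_sub_of_hasDerivWithinAt {f f' : ℝ → E} {x b C : ℝ} (hxb : x ≤ b)
    (hf : ∀ y ∈ Icc x b, HasDerivWithinAt f (f' y) (Icc x b) y) (hfb : f b = 0)
    (bound : ∀ y ∈ Ico x b, ‖f' y‖ ≤ C) : ‖f x‖ ≤ C * (b - x) := by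
  simpa [hfb] using norm_image_sub_le_of_norm_deriv_le_segment' hf bound b ⟨hxb, le_rfl⟩

/-- The factor `1 / (n + 1)!` of the sharp remainder is dropped: it is not needed for a bound
with some constant, and without it the induction only uses the mean value inequality. -/
theorem norm_sub_taylorSum_le {a b M : ℝ} (n : ℕ) {u : ℕ → ℝ → E}
    (hu : ∀ m < n + 1, ∀ s ∈ Icc a b, HasDerivWithinAt (u m) (u (m + 1) s) (Icc a b) s)
    (hM : ∀ s ∈ Icc a b, ‖u (n + 1) s‖ ≤ M) {x : ℝ} (hx : x ∈ Icc a b) :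
    ‖u 0 x - taylorSum u n b x‖ ≤ M * (b - x) ^ (n + 1) := by
  induction n generalizing u x with
  | zero =>
    have hxb : Icc x b ⊆ Icc a b := Icc_subset_Icc_left hx.1
    have hderiv : ∀ y ∈ Icc x b, HasDerivWithinAt (fun y => u 0 y - taylorSum u 0 b y)
        (u 1 y) (Icc x b) y := fun y hy => by
      simpa [taylorSum] using ((hu 0 one_pos y (hxb hy)).mono hxb).sub_const (u 0 b)
    simpa using norm_le_mul_sub_of_hasDerivWithinAt hx.2 hderiv (by simp [taylorSum_self])
      fun y hy => hM y (hxb (Ico_subset_Icc_self hy))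
  | succ n ih =>
    have hxb : Icc x b ⊆ Icc a b := Icc_subset_Icc_left hx.1
    have hderiv : ∀ y ∈ Icc x b, HasDerivWithinAt (fun y => u 0 y - taylorSum u (n + 1) b y)
        (u 1 y - taylorSum (fun m => u (m + 1)) n b y) (Icc x b) y := fun y hy =>
      ((hu 0 (by omega) y (hxb hy)).mono hxb).sub
        (hasDerivAt_taylorSum_succ u n b y).hasDerivWithinAt
    have hbound : ∀ y ∈ Ico x b,
        ‖u 1 y - taylorSum (fun m => u (m + 1)) n b y‖ ≤ M * (b - x) ^ (n + 1) := by
      intro y hy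
      have hM0 : 0 ≤ M := (norm_nonneg _).trans (hM b ⟨hx.1.trans hx.2, le_rfl⟩)
      calc _ ≤ M * (b - y) ^ (n + 1) :=
            ih (fun m hm => hu (m + 1) (by omega)) hM (hxb (Ico_subset_Icc_self hy))
        _ ≤ M * (b - x) ^ (n + 1) := by gcongr <;> linarith [hy.1, hy.2]
    rw [pow_succ, ← mul_assoc]
    exact norm_le_mul_sub_of_hasDerivWithinAt hx.2 hderiv (by simp [taylorSum_self]) hbound

end Taylor

section Consistency

open Finset

variable {E : Type*} [NormedAddCommGroup E] [NormedSpace ℝ E]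

theorem sum_smul_taylorSum_eq {k : ℕ} (hk : 1 ≤ k) {δ : ℕ → ℝ}
    (hmom : ∀ m ≤ k, ∑ j ∈ range (k + 1), δ j * j ^ m = if m = 1 then -1 else 0)
    (u : ℕ → ℝ → E) (t τ : ℝ) :
    ∑ j ∈ range (k + 1), δ j • taylorSum u k t (t - j * τ) = τ • u 1 t := by
  calc ∑ j ∈ range (k + 1), δ j • taylorSum u k t (t - j * τ)
      = ∑ m ∈ range (k + 1),
          ((∑ j ∈ range (k + 1), δ j * j ^ m) * ((-τ) ^ m / m !)) • u m t := by
        simp only [taylorSum, smul_sum, smul_smul, sum_mul, sum_smul]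
        rw [sum_comm]
        refine sum_congr rfl fun m _ => sum_congr rfl fun j _ => ?_
        ring_nf
    _ = ∑ m ∈ range (k + 1), (if m = 1 then τ • u m t else 0) := by
        refine sum_congr rfl fun m hm => ?_
        rw [hmom m (Nat.lt_succ_iff.mp (mem_range.mp hm))]
        split_ifs with h
        · subst h; norm_num
        · simp
    _ = τ • u 1 t := by rw [sum_ite_eq', if_pos (Finset.mem_range.mpr (by omega))]

theorem norm_multistep_error_le {k : ℕ} (hk : 1 ≤ k) {δ : ℕ → ℝ}
    (hmom : ∀ m ≤ k, ∑ j ∈ range (k + 1), δ j * j ^ m = if m = 1 then -1 else 0)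
    {t τ : ℝ} (hτ : 0 < τ) {u : ℕ → ℝ → E}
    (hu : ∀ m < k + 1, ∀ s ∈ Icc (t - k * τ) t,
      HasDerivWithinAt (u m) (u (m + 1) s) (Icc (t - k * τ) t) s)
    {M : ℝ} (hM : ∀ s ∈ Icc (t - k * τ) t, ‖u (k + 1) s‖ ≤ M) :
    ‖(1 / τ) • ∑ j ∈ range (k + 1), δ j • u 0 (t - j * τ) - u 1 t‖
      ≤ (∑ j ∈ range (k + 1), |δ j| * j ^ (k + 1)) * τ ^ k * M := by
  have hmem : ∀ j ∈ range (k + 1), t - j * τ ∈ Icc (t - k * τ) t := fun j hj => by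
    have hjk : (j : ℝ) ≤ k := by exact_mod_cast Nat.lt_succ_iff.mp (mem_range.mp hj)
    constructor <;> nlinarith [(Nat.cast_nonneg j : (0 : ℝ) ≤ j)]
  have herr : (1 / τ) • ∑ j ∈ range (k + 1), δ j • u 0 (t - j * τ) - u 1 t
      = τ⁻¹ • ∑ j ∈ range (k + 1), δ j • (u 0 (t - j * τ) - taylorSum u k t (t - j * τ)) := by
    simp only [smul_sub, sum_sub_distrib, sum_smul_taylorSum_eq hk hmom, smul_smul,
      inv_mul_cancel₀ hτ.ne', one_smul, one_div]
  calc _ = τ⁻¹ *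
        ‖∑ j ∈ range (k + 1), δ j • (u 0 (t - j * τ) - taylorSum u k t (t - j * τ))‖ := by
        rw [herr, norm_smul, Real.norm_of_nonneg (inv_nonneg.mpr hτ.le)]
    _ ≤ τ⁻¹ * ∑ j ∈ range (k + 1), |δ j| * (M * (t - (t - j * τ)) ^ (k + 1)) := by
        gcongr
        refine (norm_sum_le _ _).trans (sum_le_sum fun j hj => ?_)
        rw [norm_smul, Real.norm_eq_abs]
        gcongr
        exact norm_sub_taylorSum_le k hu hM (hmem j hj)
    _ = (∑ j ∈ range (k + 1), |δ j| * j ^ (k + 1)) * τ ^ k * M := by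
        rw [mul_sum, sum_mul, sum_mul]
        refine sum_congr rfl fun j _ => ?_
        field_simp
        ring

end Consistency

/-- **Optimal-order consistency bound for the implicit `k`-step BDF method.**
There is a constant `C_k`, depending only on `k` (not on `u`, `t`, `τ` or the
Banach space `X`), such that for every `(k+1)`-times continuously differentiable
`u : ℝ → X` on `[t-kτ, t]` (with `u m` denoting the `m`-th derivative of `u 0`),
`‖(1/τ) ∑_{j=0}^k δ_j u(t-jτ) - u'(t)‖ ≤ C_k τ^k max_{s ∈ [t-kτ,t]} ‖u^{(k+1)}(s)‖`. -/
theorem bdf_consistency_bound (k : ℕ) (hk : 1 ≤ k)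
    (δc : ℕ → ℝ)
    (hδ : ∀ ζ : ℂ, ∑ j ∈ Finset.range (k + 1), (δc j : ℂ) * ζ ^ j
        = ∑ ℓ ∈ Finset.Icc 1 k, ((ℓ : ℂ))⁻¹ * (1 - ζ) ^ ℓ) :
    ∃ C : ℝ, ∀ (X : Type*) [NormedAddCommGroup X] [NormedSpace ℝ X]
      (t τ : ℝ), 0 < τ → ∀ u : ℕ → ℝ → X,
      (∀ m < k + 1, ∀ s ∈ Icc (t - k * τ) t,
        HasDerivWithinAt (u m) (u (m + 1) s) (Icc (t - k * τ) t) s) →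
      ContinuousOn (u (k + 1)) (Icc (t - k * τ) t) →
      ∀ M : ℝ, (∀ s ∈ Icc (t - k * τ) t, ‖u (k + 1) s‖ ≤ M) →
      ‖(1 / τ) • ∑ j ∈ Finset.range (k + 1), δc j • u 0 (t - j * τ) - u 1 t‖
        ≤ C * τ ^ k * M := by
  have hpoly :
      ∑ j ∈ Finset.range (k + 1), Polynomial.C (δc j : ℂ) * Polynomial.X ^ j = bdfPoly k :=
    Polynomial.funext fun ζ => by simpa [bdfPoly, Polynomial.eval_finsetSum] using hδ ζ
  have hmom : ∀ m ≤ k, ∑ j ∈ Finset.range (k + 1), δc j * j ^ m = if m = 1 then -1 else 0 := by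
    intro m hm
    have hℂ := sum_mul_pow_eq_of_eq_bdfPoly hpoly hm
    split_ifs at hℂ ⊢ <;> exact_mod_cast hℂ
  exact ⟨_, fun X _ _ t τ hτ u hu _ M hM => norm_multistep_error_le hk hmom hτ hu hM⟩
end

section
/- Let X be a Banach space, k ≥ 1, and let u : ℝ → X be k-times continuously differentiable on an interval [t − kτ, t] with τ > 0. Then there is a constant C_k depending only on k (not on u, t, τ or X) such that ‖u(t) − Σ_{i=0}^{k−1} γ_i u(t − (i+1)τ)‖_X ≤ C_k τ^k max_{s ∈ [t−kτ, t]} ‖u^{(k)}(s)‖_X. -/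
open Set

private lemma pascal_sum {X : Type*} [AddCommGroup X] [Module ℝ X] (k : ℕ) (w : ℕ → X) :
    ∑ j ∈ Finset.range (k+2), ((-1:ℝ)^j * ((k+1).choose j : ℝ)) • w j
      = ∑ j ∈ Finset.range (k+1), ((-1:ℝ)^j * (k.choose j : ℝ)) • (w j - w (j+1)) := by
  have hS : ∑ j ∈ Finset.range (k+1), ((-1:ℝ)^j * (k.choose j : ℝ)) • (w j - w (j+1))
      = (∑ j ∈ Finset.range (k+1), ((-1:ℝ)^j * (k.choose j : ℝ)) • w j)
        - ∑ j ∈ Finset.range (k+1), ((-1:ℝ)^j * (k.choose j : ℝ)) • w (j+1) := by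
    simp [smul_sub, Finset.sum_sub_distrib]
  rw [hS, Finset.sum_range_succ']
  have hterm : ∀ j, ((-1:ℝ)^(j+1) * ((k+1).choose (j+1) : ℝ)) • w (j+1)
      = (-(((-1:ℝ)^j * (k.choose j : ℝ)) • w (j+1)))
        + ((-1:ℝ)^(j+1) * (k.choose (j+1) : ℝ)) • w (j+1) := by
    intro j
    rw [Nat.choose_succ_succ, Nat.cast_add, pow_succ]
    module
  simp only [hterm]
  rw [Finset.sum_add_distrib, Finset.sum_neg_distrib]
  have hT : ∑ j ∈ Finset.range (k+1), ((-1:ℝ)^(j+1) * (k.choose (j+1) : ℝ)) • w (j+1)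
      = (∑ j ∈ Finset.range (k+1), ((-1:ℝ)^j * (k.choose j : ℝ)) • w j)
        - ((-1:ℝ)^0 * (k.choose 0 : ℝ)) • w 0 := by
    rw [Finset.sum_range_succ, Nat.choose_succ_self]
    rw [eq_sub_iff_add_eq]
    rw [Finset.sum_range_succ' (fun j => ((-1:ℝ)^j * (k.choose j : ℝ)) • w j) k]
    simp
  rw [hT]
  simp
  abel

private lemma key_bound (k : ℕ) :
    ∀ (X : Type*) [NormedAddCommGroup X] [NormedSpace ℝ X] (t τ M : ℝ), 0 < τ →
    ∀ u : ℕ → ℝ → X,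
      (∀ m < k, ∀ s ∈ Icc (t - k * τ) t,
        HasDerivWithinAt (u m) (u (m + 1) s) (Icc (t - k * τ) t) s) →
      (∀ s ∈ Icc (t - k * τ) t, ‖u k s‖ ≤ M) →
      ‖∑ j ∈ Finset.range (k+1), ((-1:ℝ)^j * (k.choose j : ℝ)) • u 0 (t - j * τ)‖
        ≤ τ ^ k * M := by
  induction k with
  | zero =>
    intro X _ _ t τ M hτ u _ hM
    have := hM t (by constructor <;> simp)
    simpa using this
  | succ k ih =>
    intro X _ _ t τ M hτ u hu hM
    have hcast : ((k+1 : ℕ) : ℝ) = (k : ℝ) + 1 := by push_cast; ring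
    have hsub : Icc (t - (k:ℝ) * τ) t ⊆ Icc (t - ((k+1:ℕ)) * τ) t := by
      apply Set.Icc_subset_Icc _ le_rfl
      rw [hcast]; nlinarith
    have hmem_shift : ∀ s ∈ Icc (t - (k:ℝ) * τ) t, s - τ ∈ Icc (t - ((k+1:ℕ)) * τ) t := by
      intro s hs
      obtain ⟨h1, h2⟩ := hs
      constructor
      · rw [hcast]; nlinarith
      · nlinarith
    set v : ℕ → ℝ → X := fun m s => u m s - u m (s - τ) with hv
    have hvderiv : ∀ m < k, ∀ s ∈ Icc (t - (k:ℝ) * τ) t,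
        HasDerivWithinAt (v m) (v (m+1) s) (Icc (t - (k:ℝ) * τ) t) s := by
      intro m hm s hs
      have h1 : HasDerivWithinAt (u m) (u (m+1) s) (Icc (t - (k:ℝ) * τ) t) s :=
        (hu m (Nat.lt_succ_of_lt hm) s (hsub hs)).mono hsub
      have h2 : HasDerivWithinAt (fun x => u m (x - τ)) ((1:ℝ) • u (m+1) (s - τ))
          (Icc (t - (k:ℝ) * τ) t) s := by
        exact HasDerivWithinAt.scomp_of_eq (x := s)
          (hu m (Nat.lt_succ_of_lt hm) (s - τ) (hmem_shift s hs))
          ((hasDerivWithinAt_id s _).sub_const τ) (fun x hx => hmem_shift x hx) rfl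
      rw [one_smul] at h2
      exact h1.sub h2
    have hvM : ∀ s ∈ Icc (t - (k:ℝ) * τ) t, ‖v k s‖ ≤ τ * M := by
      intro s hs
      obtain ⟨hs1, hs2⟩ := hs
      have hsub2 : Icc (s - τ) s ⊆ Icc (t - ((k+1:ℕ)) * τ) t := by
        apply Set.Icc_subset_Icc
        · rw [hcast]; nlinarith
        · exact hs2
      have hmvt := norm_image_sub_le_of_norm_deriv_le_segment'
        (f := u k) (f' := u (k+1)) (C := M) (a := s - τ) (b := s)
        (fun x hx => (hu k (Nat.lt_succ_self k) x (hsub2 hx)).mono hsub2)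
        (fun x hx => hM x (hsub2 (Ico_subset_Icc_self hx)))
        s (right_mem_Icc.2 (by linarith))
      simp only [hv]
      calc ‖u k s - u k (s - τ)‖ ≤ M * (s - (s - τ)) := hmvt
        _ = τ * M := by ring
    have hih := ih X t τ (τ * M) hτ v hvderiv hvM
    have hw : ∑ j ∈ Finset.range (k+1+1), ((-1:ℝ)^j * ((k+1).choose j : ℝ)) • u 0 (t - j * τ)
        = ∑ j ∈ Finset.range (k+1), ((-1:ℝ)^j * (k.choose j : ℝ)) • v 0 (t - j * τ) := by
      have := pascal_sum k (fun j => u 0 (t - j * τ))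
      rw [this]
      apply Finset.sum_congr rfl
      intro j _
      simp only [hv]
      congr 2
      push_cast; ring
    rw [hw]
    calc ‖∑ j ∈ Finset.range (k+1), ((-1:ℝ)^j * (k.choose j : ℝ)) • v 0 (t - j * τ)‖
        ≤ τ ^ k * (τ * M) := hih
      _ = τ ^ (k+1) * M := by ring
open Polynomial

private lemma gamma_eq (k : ℕ) (γc : ℕ → ℝ)
    (hγ : ∀ ζ : ℂ, ζ * ∑ i ∈ Finset.range k, (γc i : ℂ) * ζ ^ i = 1 - (1 - ζ) ^ k) :
    ∀ i < k, γc i = (-1)^i * (k.choose (i+1) : ℝ) := by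
  intro i hi
  have hpq : (X * ∑ i ∈ Finset.range k, C (γc i : ℂ) * X ^ i : ℂ[X])
      = 1 - (1 - X)^k := by
    apply Polynomial.funext
    intro ζ
    simp only [Polynomial.eval_mul, Polynomial.eval_X, Polynomial.eval_finset_sum,
      Polynomial.eval_C, Polynomial.eval_pow, Polynomial.eval_sub, Polynomial.eval_one]
    exact hγ ζ
  have hc := congrArg (fun p => Polynomial.coeff p (i+1)) hpq
  simp only [coeff_X_mul] at hc
  have hL : (∑ i ∈ Finset.range k, C (γc i : ℂ) * X ^ i).coeff i = (γc i : ℂ) := by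
    rw [Polynomial.finset_sum_coeff]
    simp only [coeff_C_mul, coeff_X_pow, mul_ite, mul_one, mul_zero]
    rw [Finset.sum_ite_eq (Finset.range k)]
    simp [hi]
  have hexp : ((1:ℂ[X]) - X)^k = ∑ m ∈ Finset.range (k+1),
      C ((-1)^m * (k.choose m : ℂ)) * X ^ m := by
    have : ((1:ℂ[X]) - X) = -X + 1 := by ring
    rw [this, add_pow]
    apply Finset.sum_congr rfl
    intro m _
    rw [neg_pow]
    simp [C_mul, mul_comm, mul_assoc, mul_left_comm]
  have hR : ((1:ℂ[X]) - (1 - X)^k).coeff (i+1) = (-1)^i * (k.choose (i+1) : ℂ) := by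
    rw [coeff_sub, hexp, Polynomial.finset_sum_coeff]
    simp only [coeff_C_mul, coeff_X_pow, mul_ite, mul_one, mul_zero]
    rw [Finset.sum_ite_eq (Finset.range (k+1))]
    have : i + 1 ∈ Finset.range (k+1) := by simpa using hi
    simp only [this, if_pos, coeff_one]
    simp [pow_succ]
  rw [hL, hR] at hc
  have : ((γc i : ℂ)) = (((-1:ℝ)^i * (k.choose (i+1) : ℝ) : ℝ) : ℂ) := by
    rw [hc]; push_cast; ring
  exact_mod_cast this



open Set

/-- **Optimal-order error bound for the BDF extrapolation.**
There is a constant `C_k`, depending only on `k` (not on `u`, `t`, `τ` or the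
Banach space `X`), such that for every `k`-times continuously differentiable
`u : ℝ → X` on `[t-kτ, t]` (with `u m` denoting the `m`-th derivative of `u 0`),
`‖u(t) - ∑_{i=0}^{k-1} γ_i u(t-(i+1)τ)‖ ≤ C_k τ^k max_{s ∈ [t-kτ,t]} ‖u^{(k)}(s)‖`,
where `γ_0, …, γ_{k-1}` are defined by `∑_{i=0}^{k-1} γ_i ζ^i = (1 - (1-ζ)^k)/ζ`. -/
theorem bdf_extrapolation_bound (k : ℕ) (hk : 1 ≤ k)
    (γc : ℕ → ℝ)
    (hγ : ∀ ζ : ℂ, ζ * ∑ i ∈ Finset.range k, (γc i : ℂ) * ζ ^ i = 1 - (1 - ζ) ^ k) :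
    ∃ C : ℝ, ∀ (X : Type*) [NormedAddCommGroup X] [NormedSpace ℝ X]
      (t τ : ℝ), 0 < τ → ∀ u : ℕ → ℝ → X,
      (∀ m < k, ∀ s ∈ Icc (t - k * τ) t,
        HasDerivWithinAt (u m) (u (m + 1) s) (Icc (t - k * τ) t) s) →
      ContinuousOn (u k) (Icc (t - k * τ) t) →
      ∀ M : ℝ, (∀ s ∈ Icc (t - k * τ) t, ‖u k s‖ ≤ M) →
      ‖u 0 t - ∑ i ∈ Finset.range k, γc i • u 0 (t - (i + 1) * τ)‖
        ≤ C * τ ^ k * M := by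
  refine ⟨1, ?_⟩
  intro X _ _ t τ hτ u hderiv _hcont M hM
  have hγc := gamma_eq k γc hγ
  have hrw : ∑ j ∈ Finset.range (k+1), ((-1:ℝ)^j * (k.choose j : ℝ)) • u 0 (t - j * τ)
      = u 0 t - ∑ i ∈ Finset.range k, γc i • u 0 (t - (i + 1) * τ) := by
    rw [Finset.sum_range_succ']
    have h0 : ((-1:ℝ)^0 * (k.choose 0 : ℝ)) • u 0 (t - (0:ℕ) * τ) = u 0 t := by
      norm_num
    rw [h0]
    have hterm : ∀ i ∈ Finset.range k,
        ((-1:ℝ)^(i+1) * (k.choose (i+1) : ℝ)) • u 0 (t - (i+1 : ℕ) * τ)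
        = -(γc i • u 0 (t - ((i:ℝ) + 1) * τ)) := by
      intro i hi
      rw [hγc i (Finset.mem_range.1 hi)]
      have : ((i+1 : ℕ) : ℝ) = (i : ℝ) + 1 := by push_cast; ring
      rw [this, pow_succ]
      module
    rw [Finset.sum_congr rfl hterm, Finset.sum_neg_distrib]
    abel
  rw [← hrw, one_mul]
  exact key_bound k X t τ M hτ u hderiv hM
end

section
/- For every k with 1 ≤ k ≤ 6, the polynomial μ(ζ) := δ(ζ)/(1 − ζ) = Σ_{ℓ=1}^k (1/ℓ)(1−ζ)^{ℓ−1} of degree k − 1 has no zeros in the closed unit disk: μ(ζ) ≠ 0 for all complex ζ with |ζ| ≤ 1. -/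
/-!
If a multiple `m * μ` has constant coefficient larger than the sum of the moduli of
its other coefficients, then `m * μ`, and hence `μ`, has no zero in the closed unit disk. For
`k ≤ 6` such multipliers `m` exist with small integer coefficients: rounded truncations of the
power series of `1 / μ` at `0` will do.
-/

open Finset

theorem add_sum_mul_pow_succ_ne_zero_of_sum_norm_lt {R : Type*} [SeminormedRing R] {n : ℕ}
    {z : R} (hz : ‖z‖ ≤ 1) {c : R} {a : Fin n → R} (hdom : ∑ i, ‖a i‖ < ‖c‖) :
    c + ∑ i, a i * z ^ (i.val + 1) ≠ 0 := by
  intro h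
  have htail : ‖∑ i, a i * z ^ (i.val + 1)‖ ≤ ∑ i, ‖a i‖ := by
    refine (norm_sum_le _ _).trans (sum_le_sum fun i _ => (norm_mul_le _ _).trans ?_)
    have hpow : ‖z ^ (i.val + 1)‖ ≤ 1 :=
      (norm_pow_le' z i.val.succ_pos).trans (pow_le_one₀ (norm_nonneg z) hz)
    exact mul_le_of_le_one_right (norm_nonneg _) hpow
  rw [eq_neg_of_add_eq_zero_left h, norm_neg] at hdom
  exact htail.not_gt hdom

/-- **The reduced BDF polynomial `μ(ζ) = δ(ζ)/(1-ζ)` has no zeros in the closed unit disk.**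
For `1 ≤ k ≤ 6` and every complex `ζ` with `|ζ| ≤ 1`,
`μ(ζ) = ∑_{ℓ=1}^k (1/ℓ)(1-ζ)^{ℓ-1} ≠ 0`. -/
theorem bdf_mu_no_zeros_closed_disk (k : ℕ) (hk1 : 1 ≤ k) (hk6 : k ≤ 6)
    (ζ : ℂ) (hζ : ‖ζ‖ ≤ 1) :
    ∑ ℓ ∈ Finset.Icc 1 k, ((ℓ : ℂ))⁻¹ * (1 - ζ) ^ (ℓ - 1) ≠ 0 := by
  intro hμ
  interval_cases k <;>
    simp only [sum_Icc_succ_top, Nat.reduceAdd, Nat.one_le_ofNat, Icc_self, sum_singleton,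
      Nat.reduceSub, Nat.cast_one, Nat.cast_ofNat] at hμ
  · norm_num at hμ
  · refine add_sum_mul_pow_succ_ne_zero_of_sum_norm_lt (c := 3) (a := ![-1]) hζ
      (by norm_num) ?_
    simp only [Fin.sum_univ_succ, Fin.sum_univ_zero, Matrix.cons_val_zero, Fin.val_zero]
    linear_combination 2 * hμ
  · refine add_sum_mul_pow_succ_ne_zero_of_sum_norm_lt (c := 11) (a := ![-7, 2]) hζ
      (by norm_num [Fin.sum_univ_succ]) ?_
    simp only [Fin.sum_univ_succ, Fin.sum_univ_zero, Matrix.cons_val_zero,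
      Matrix.cons_val_succ, Fin.val_zero, Fin.val_succ]
    linear_combination 6 * hμ
  · refine add_sum_mul_pow_succ_ne_zero_of_sum_norm_lt (c := 175)
      (a := ![-11, -47, 57, -18]) hζ (by norm_num [Fin.sum_univ_succ]) ?_
    simp only [Fin.sum_univ_succ, Fin.sum_univ_zero, Matrix.cons_val_zero,
      Matrix.cons_val_succ, Fin.val_zero, Fin.val_succ]
    linear_combination 12 * (7 + 6 * ζ) * hμ
  · refine add_sum_mul_pow_succ_ne_zero_of_sum_norm_lt (c := 274)
      (a := ![-52, 85, -15, 35, -39, 12]) hζ (by norm_num [Fin.sum_univ_succ]) ?_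
    simp only [Fin.sum_univ_succ, Fin.sum_univ_zero, Matrix.cons_val_zero,
      Matrix.cons_val_succ, Fin.val_zero, Fin.val_succ]
    linear_combination 60 * (2 + 2 * ζ + ζ ^ 2) * hμ
  · refine add_sum_mul_pow_succ_ne_zero_of_sum_norm_lt (c := 735)
      (a := ![-36, -12, -23, -12, -227, 69, 120, -94, 20]) hζ
      (by norm_num [Fin.sum_univ_succ]) ?_
    simp only [Fin.sum_univ_succ, Fin.sum_univ_zero, Matrix.cons_val_zero,
      Matrix.cons_val_succ, Fin.val_zero, Fin.val_succ]
    linear_combination 60 * (5 + 7 * ζ + 2 * ζ ^ 2 - 3 * ζ ^ 3 - 2 * ζ ^ 4) * hμ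
end
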